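/- Let $D_1, D_2$ be positive integers with $D_1 \mid D_2$, $D_1 > 1$, and having the same prime divisors. Let $S_2$ denote the subsum of the GL(3) Kloosterman sum $S(m_1, m_2, n_1, n_2; D_1, D_2)$ restricted to terms with $\gcd(B_2, D_2) = 1$. Then $S_2 = S(0, n_1; D_1) \cdot S(m_2, n_2 D_1; D_2)$. -/

import Mathlib

open Finset

/-- `e(x) = e^{2πix}`. -/
noncomputable def efn (x : ℝ) : ℂ := Complex.exp (2 * Real.pi * Complex.I * x)

/-- Classical Kloosterman sum `S(a,b;c) = ∑_{x mod c, (x,c)=1} e((ax + b x̄)/c)`. -/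
noncomputable def Kl (a b : ℤ) (c : ℕ) : ℂ :=
  ∑ x ∈ Finset.range c, if Nat.gcd x c = 1 then
    efn (((a * x + b * (((x : ZMod c)⁻¹).val : ℤ) : ℤ) : ℝ) / c) else 0

def Ycoef (B C D : ℕ) : ℤ := Nat.gcdA B (Nat.gcd C D)
def Zcoef (B C D : ℕ) : ℤ := Nat.gcdB B (Nat.gcd C D) * Nat.gcdA C D

/-- The subsum `S₂` of the GL(3) Kloosterman sum restricted to terms with `gcd(B₂,D₂)=1`. -/
noncomputable def S2sub (m1 m2 n1 n2 : ℤ) (D1 D2 : ℕ) : ℂ :=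
  ∑ B1 ∈ Finset.range D1, ∑ C1 ∈ Finset.range D1,
  ∑ B2 ∈ Finset.range D2, ∑ C2 ∈ Finset.range D2,
    if Nat.gcd B2 D2 = 1 ∧
       Nat.gcd B1 (Nat.gcd C1 D1) = 1 ∧ Nat.gcd B2 (Nat.gcd C2 D2) = 1 ∧
       (D1 * D2) ∣ (D1 * C2 + B1 * B2 + D2 * C1) then
      efn ((((m1 * B1 + n1 * (Ycoef B1 C1 D1 * D2 - Zcoef B1 C1 D1 * B2)) : ℤ) : ℝ) / D1
        + (((m2 * B2 + n2 * (Ycoef B2 C2 D2 * D1 - Zcoef B2 C2 D2 * B1)) : ℤ) : ℝ) / D2)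
    else 0

/-!
Reducing the congruence `D₁C₂ + B₁B₂ + D₂C₁ ≡ 0` modulo `D₁` gives `B₁B₂ ≡ 0`, and `B₂`, a unit
modulo `D₂`, stays a unit modulo its divisor `D₁`, so only `B₁ = 0` contributes. Then `gcd(B₁, C₁, D₁) = 1` makes `C₁` a unit, the
congruence pins down `C₂ ≡ -(D₂/D₁)C₁ (mod D₂)`, and the Bézout coefficients reduce to
`Z₁ ≡ C̄₁ (mod D₁)` and `D₁Y₂ ≡ D₁B̄₂ (mod D₂)` (because `D₁C₂ ≡ 0`). Each surviving term is
`e(-n₁B₂C̄₁/D₁) e((m₂B₂ + n₂D₁B̄₂)/D₂)`, and the substitution `x = -C₁B̄₂` turns the `C₁`-sum into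
`S(0, n₁; D₁)` whatever `B₂` is.
-/

open ZMod

lemma efn_add (x y : ℝ) : efn (x + y) = efn x * efn y := by
  rw [efn, efn, efn, ← Complex.exp_add]
  push_cast
  ring_nf

lemma efn_intCast_div (D : ℕ) [NeZero D] (a : ℤ) :
    efn ((a : ℝ) / D) = stdAddChar (a : ZMod D) := by
  rw [efn, stdAddChar_coe]
  push_cast
  ring_nf

lemma sum_range_coprime_eq_sum_units {M : Type*} [AddCommMonoid M] {n : ℕ} [NeZero n]
    (f : ZMod n → M) :
    ∑ x ∈ range n, (if x.gcd n = 1 then f x else 0) = ∑ u : (ZMod n)ˣ, f u := by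
  rw [← sum_filter]
  refine sum_bij' (fun x hx => unitOfCoprime x (mem_filter.1 hx).2) (fun u _ => (u : ZMod n).val)
    ?_ ?_ ?_ ?_ ?_
  · simp
  · intro u _
    exact mem_filter.2 ⟨mem_range.2 (val_lt _), val_coe_unit_coprime u⟩
  · intro x hx
    simp [unitOfCoprime, val_cast_of_lt (mem_range.1 (mem_filter.1 hx).1)]
  · intro u _
    ext
    simp [unitOfCoprime]
  · simp [unitOfCoprime]

lemma Kl_eq_sum_range_stdAddChar (a b : ℤ) (c : ℕ) [NeZero c] :
    Kl a b c = ∑ x ∈ range c, if x.gcd c = 1 then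
      stdAddChar ((a : ZMod c) * (x : ZMod c) + (b : ZMod c) * (x : ZMod c)⁻¹) else 0 := by
  refine sum_congr rfl fun x _ => ?_
  rw [efn_intCast_div]
  push_cast
  rw [natCast_zmod_val]

lemma sum_coprime_stdAddChar_neg_mul_inv (b : ℤ) {c : ℕ} [NeZero c] (v : (ZMod c)ˣ) :
    ∑ x ∈ range c, (if x.gcd c = 1 then
      stdAddChar (-((b : ZMod c) * (v : ZMod c) * (x : ZMod c)⁻¹)) else 0) = Kl 0 b c := by
  rw [Kl_eq_sum_range_stdAddChar]
  simp only [Int.cast_zero, zero_mul, zero_add]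
  rw [sum_range_coprime_eq_sum_units (fun x => stdAddChar (-((b : ZMod c) * (v : ZMod c) * x⁻¹))),
    sum_range_coprime_eq_sum_units (fun x => stdAddChar ((b : ZMod c) * x⁻¹))]
  refine Fintype.sum_equiv (Equiv.mulRight (-v⁻¹)) _ _ fun u => ?_
  have hinv : (-((u : ZMod c) * ↑v⁻¹))⁻¹ = -(↑v * ↑u⁻¹) :=
    ZMod.inv_eq_of_mul_eq_one _ _ _ (by simp [mul_assoc])
  simp only [inv_coe_unit, Equiv.coe_mulRight, Units.val_mul, Units.val_neg, mul_neg, hinv,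
    mul_assoc]

lemma Ycoef_mul_add_Zcoef_mul {B C D : ℕ} (h : B.gcd (C.gcd D) = 1) :
    (Ycoef B C D : ZMod D) * B + (Zcoef B C D : ZMod D) * C = 1 := by
  have e1 := congrArg (Int.cast : ℤ → ZMod D) (Nat.gcd_eq_gcd_ab B (C.gcd D))
  have e2 := congrArg (Int.cast : ℤ → ZMod D) (Nat.gcd_eq_gcd_ab C D)
  rw [h] at e1
  push_cast [natCast_self] at e1 e2
  simp only [Ycoef, Zcoef]
  push_cast
  linear_combination -e1 - (Nat.gcdB B (C.gcd D) : ZMod D) * e2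

lemma Zcoef_zero_left {C D : ℕ} (h : C.Coprime D) :
    (Zcoef 0 C D : ZMod D) = (C : ZMod D)⁻¹ := by
  have hbez := Ycoef_mul_add_Zcoef_mul (B := 0) (by rwa [Nat.gcd_zero_left])
  refine (ZMod.inv_eq_of_mul_eq_one _ _ _ ?_).symm
  push_cast at hbez
  linear_combination hbez

lemma natCast_mul_Ycoef {B C D d : ℕ} (hB : B.Coprime D) (hd : (d : ZMod D) * C = 0) :
    (d : ZMod D) * Ycoef B C D = d * (B : ZMod D)⁻¹ := by
  have hbez := Ycoef_mul_add_Zcoef_mul (B := B) (C := C)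
    (Nat.Coprime.coprime_dvd_right (Nat.gcd_dvd_right C D) hB)
  have hinv := coe_mul_inv_eq_one B hB
  linear_combination (-(d : ZMod D) * Ycoef B C D) * hinv + (d * (B : ZMod D)⁻¹) * hbez
    - (Zcoef B C D * (B : ZMod D)⁻¹) * hd

lemma mul_dvd_mul_add_mul_iff {D1 D2 : ℕ} (hD1 : 0 < D1) (hdvd : D1 ∣ D2) (C1 C2 : ℕ) :
    D1 * D2 ∣ D1 * C2 + D2 * C1 ↔ (C2 : ZMod D2) = -((D2 / D1 * C1 : ℕ) : ZMod D2) := by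
  obtain ⟨E, rfl⟩ := hdvd
  rw [Nat.mul_div_cancel_left E hD1, show D1 * C2 + D1 * E * C1 = D1 * (C2 + E * C1) by ring,
    Nat.mul_dvd_mul_iff_left hD1, ← natCast_eq_zero_iff, eq_neg_iff_add_eq_zero]
  push_cast
  rfl

noncomputable def S2term (m1 m2 n1 n2 : ℤ) (D1 D2 B1 C1 B2 C2 : ℕ) : ℂ :=
  if Nat.gcd B2 D2 = 1 ∧
     Nat.gcd B1 (Nat.gcd C1 D1) = 1 ∧ Nat.gcd B2 (Nat.gcd C2 D2) = 1 ∧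
     (D1 * D2) ∣ (D1 * C2 + B1 * B2 + D2 * C1) then
    efn ((((m1 * B1 + n1 * (Ycoef B1 C1 D1 * D2 - Zcoef B1 C1 D1 * B2)) : ℤ) : ℝ) / D1
      + (((m2 * B2 + n2 * (Ycoef B2 C2 D2 * D1 - Zcoef B2 C2 D2 * B1)) : ℤ) : ℝ) / D2)
  else 0

lemma S2sub_eq_sum_S2term (m1 m2 n1 n2 : ℤ) (D1 D2 : ℕ) :
    S2sub m1 m2 n1 n2 D1 D2 = ∑ B1 ∈ range D1, ∑ C1 ∈ range D1, ∑ B2 ∈ range D2,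
      ∑ C2 ∈ range D2, S2term m1 m2 n1 n2 D1 D2 B1 C1 B2 C2 := rfl

section

variable (m1 m2 n1 n2 : ℤ) {D1 D2 : ℕ}

lemma S2term_eq_zero_of_ne_zero (hdvd : D1 ∣ D2) {B1 : ℕ} (hB1 : B1 < D1) (hB1' : B1 ≠ 0)
    (C1 B2 C2 : ℕ) : S2term m1 m2 n1 n2 D1 D2 B1 C1 B2 C2 = 0 := by
  refine if_neg fun ⟨hB2, _, _, hdiv⟩ => hB1' ?_
  have hD1 : D1 ∣ B1 * B2 := by
    have := (dvd_mul_right D1 D2).trans hdiv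
    rwa [Nat.dvd_add_left (hdvd.mul_right C1), Nat.dvd_add_right (dvd_mul_right D1 C2)] at this
  exact Nat.eq_zero_of_dvd_of_lt
    ((Nat.Coprime.coprime_dvd_right hdvd hB2).symm.dvd_of_dvd_mul_right hD1) hB1

lemma S2term_zero_left [NeZero D1] [NeZero D2] (hdvd : D1 ∣ D2) (C1 B2 C2 : ℕ) :
    S2term m1 m2 n1 n2 D1 D2 0 C1 B2 C2 =
      if (B2.gcd D2 = 1 ∧ C1.gcd D1 = 1) ∧ (C2 : ZMod D2) = -((D2 / D1 * C1 : ℕ) : ZMod D2) then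
        stdAddChar (-((n1 : ZMod D1) * (B2 : ZMod D1) * (C1 : ZMod D1)⁻¹)) *
          stdAddChar ((m2 : ZMod D2) * (B2 : ZMod D2) + ((n2 * D1 : ℤ) : ZMod D2) * (B2 : ZMod D2)⁻¹)
      else 0 := by
  have hD1 : 0 < D1 := Nat.pos_of_ne_zero (NeZero.ne D1)
  unfold S2term
  by_cases hcop : B2.gcd D2 = 1 ∧ C1.gcd D1 = 1
  swap
  · rw [if_neg fun h => hcop ⟨h.1, by simpa using h.2.1⟩, if_neg fun h => hcop h.1]
  obtain ⟨hB2, hC1⟩ := hcop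
  have hB2C2 : B2.gcd (C2.gcd D2) = 1 :=
    Nat.Coprime.coprime_dvd_right (Nat.gcd_dvd_right C2 D2) hB2
  simp only [Nat.gcd_zero_left, zero_mul, add_zero, hB2, hC1, hB2C2, true_and,
    ← mul_dvd_mul_add_mul_iff hD1 hdvd]
  split_ifs with hdiv
  · rw [efn_add, efn_intCast_div, efn_intCast_div]
    have hD2 : (D2 : ZMod D1) = 0 := (natCast_eq_zero_iff _ _).2 hdvd
    have hD1C2 : (D1 : ZMod D2) * C2 = 0 := by
      rw [← Nat.cast_mul, natCast_eq_zero_iff]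
      exact (Nat.dvd_add_left (dvd_mul_right D2 C1)).1 ((dvd_mul_left D2 D1).trans hdiv)
    congr 2
    · push_cast
      rw [hD2, Zcoef_zero_left hC1]
      ring
    · push_cast
      linear_combination (n2 : ZMod D2) * natCast_mul_Ycoef hB2 hD1C2
  · rfl

end

lemma sum_range_ite_and_natCast_eq {M : Type*} [AddCommMonoid M] {n : ℕ} [NeZero n]
    (p : Prop) [Decidable p] (c : ZMod n) (x : M) :
    ∑ k ∈ range n, (if p ∧ (k : ZMod n) = c then x else 0) = if p then x else 0 := by
  rw [sum_eq_single_of_mem c.val (mem_range.2 (val_lt c)) fun k hk hne => if_neg fun h => hne ?_]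
  · simp only [natCast_zmod_val, and_true]
  · rw [← h.2, val_cast_of_lt (mem_range.1 hk)]

lemma sum_sum_coprime_stdAddChar_eq_Kl_mul_Kl (m2 n1 n2 : ℤ) {D1 D2 : ℕ} [NeZero D1] [NeZero D2]
    (hdvd : D1 ∣ D2) :
    ∑ C1 ∈ range D1, ∑ B2 ∈ range D2, (if B2.gcd D2 = 1 ∧ C1.gcd D1 = 1 then
      stdAddChar (-((n1 : ZMod D1) * (B2 : ZMod D1) * (C1 : ZMod D1)⁻¹)) *
        stdAddChar ((m2 : ZMod D2) * (B2 : ZMod D2) + ((n2 * D1 : ℤ) : ZMod D2) * (B2 : ZMod D2)⁻¹)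
      else 0) = Kl 0 n1 D1 * Kl m2 (n2 * D1) D2 := by
  rw [sum_comm, Kl_eq_sum_range_stdAddChar m2, mul_sum]
  refine sum_congr rfl fun B2 _ => ?_
  by_cases hB2 : B2.gcd D2 = 1
  · simp only [hB2, true_and, if_true]
    rw [← sum_coprime_stdAddChar_neg_mul_inv n1
      (unitOfCoprime B2 (Nat.Coprime.coprime_dvd_right hdvd hB2)), sum_mul]
    refine sum_congr rfl fun C1 _ => ?_
    split_ifs <;> simp [unitOfCoprime]
  · simp [hB2]

theorem stmt3_general (D1 D2 : ℕ) (hdvd : D1 ∣ D2) (m1 m2 n1 n2 : ℤ) :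
    S2sub m1 m2 n1 n2 D1 D2 = Kl 0 n1 D1 * Kl m2 (n2 * D1) D2 := by
  rcases Nat.eq_zero_or_pos D2 with rfl | hD2
  · simp [S2sub, Kl]
  have : NeZero D2 := NeZero.of_pos hD2
  have : NeZero D1 := NeZero.of_pos (Nat.pos_of_dvd_of_pos hdvd hD2)
  rw [S2sub_eq_sum_S2term, sum_eq_single_of_mem 0 (mem_range.2 (NeZero.pos D1)) fun B1 hB1 hB1' =>
    sum_eq_zero fun C1 _ => sum_eq_zero fun B2 _ => sum_eq_zero fun C2 _ =>
      S2term_eq_zero_of_ne_zero m1 m2 n1 n2 hdvd (mem_range.1 hB1) hB1' C1 B2 C2]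
  simp only [S2term_zero_left m1 m2 n1 n2 hdvd, sum_range_ite_and_natCast_eq]
  exact sum_sum_coprime_stdAddChar_eq_Kl_mul_Kl m2 n1 n2 hdvd

/-- `S₂ = S(0,n₁;D₁) · S(m₂,n₂D₁;D₂)` for `1 < D₁ ∣ D₂` with the same prime divisors. -/
theorem stmt3 (D1 D2 : ℕ) (h1 : 1 < D1) (hdvd : D1 ∣ D2)
    (hsame : ∀ p : ℕ, p.Prime → (p ∣ D1 ↔ p ∣ D2)) (m1 m2 n1 n2 : ℤ) :
    S2sub m1 m2 n1 n2 D1 D2 = Kl 0 n1 D1 * Kl m2 (n2 * D1) D2 :=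
  stmt3_general D1 D2 hdvd m1 m2 n1 n2
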